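/- For a countable tree plan Γ, the structure Γ(ω) is K(Γ)-universal (every A ∈ K(Γ) embeds into Γ(ω)), K(Γ)-homogeneous (every embedding A → Γ(ω) with A ≤ B ∈ K(Γ) extends to an embedding B → Γ(ω)), and K(Γ)-closed (every finite subset of Γ(ω) is contained in a substructure isomorphic to some Γ(n)); hence Γ(ω) is the Fraïssé limit of K(Γ). -/

import Mathlib

/-- A tree plan: a finite set of nodes of `ω^{<ω}` together with a labeling,
`lab σ = true` meaning `λ(σ) = ∞` and `lab σ = false` meaning `λ(σ) = 1`. -/
structure TreePlan where
  nodes : Finset (List ℕ)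
  lab : List ℕ → Bool

/-- The conditions making the data of a `TreePlan` an actual tree plan:
it contains the root, is closed under predecessor, and the root is not an infinity-node. -/
def IsTreePlan (Γ : TreePlan) : Prop :=
  [] ∈ Γ.nodes ∧ (∀ σ ∈ Γ.nodes, σ.dropLast ∈ Γ.nodes) ∧ Γ.lab [] = false

/-- The projection `π` forgetting the second coordinates. -/
def piX {S : Type*} (a : List (ℕ × Option S)) : List ℕ := a.map Prod.fst

/-- The tree `Γ(X)`, for `X` a set in an ambient type `S`.  Entries are pairs `(i, t)`
where `t = none` codes `★` (at nodes with `λ = 1`) and `t = some x` with `x ∈ X`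
at infinity-nodes. -/
def GammaSet (Γ : TreePlan) {S : Type*} (X : Set S) : Set (List (ℕ × Option S)) :=
  {a | piX a ∈ Γ.nodes ∧ ∀ (k : ℕ) (hk : k < a.length),
    (Γ.lab ((piX a).take (k + 1)) = false → (a.get ⟨k, hk⟩).2 = none) ∧
    (Γ.lab ((piX a).take (k + 1)) = true → ∃ x ∈ X, (a.get ⟨k, hk⟩).2 = some x)}

/-- `Γ(ω)`, realized with `X = ℕ`. -/
def GammaOmega (Γ : TreePlan) : Set (List (ℕ × Option ℕ)) :=
  GammaSet Γ (Set.univ : Set ℕ)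

/-- `Γ(n) = Γ([n])` with `[n] = {0, …, n-1} ⊆ ℕ`. -/
def GammaN (Γ : TreePlan) (n : ℕ) : Set (List (ℕ × Option ℕ)) :=
  GammaSet Γ {k : ℕ | k < n}

/-- `↓B`, the downward closure of `B` in `Γ(X)` with respect to the
initial-segment order. -/
def downSet (Γ : TreePlan) {S : Type*} (X : Set S) (B : Set (List (ℕ × Option S))) :
    Set (List (ℕ × Option S)) :=
  {a ∈ GammaSet Γ X | ∃ b ∈ B, a <+: b}

/-- The approximations to the tree closure. -/
def tclAux (Γ : TreePlan) {S : Type*} (X : Set S) (B : Set (List (ℕ × Option S))) :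
    ℕ → Set (List (ℕ × Option S))
  | 0 => insert [] (downSet Γ X B)
  | n + 1 => tclAux Γ X B n ∪
      {a ∈ GammaSet Γ X | Γ.lab (piX a) = false ∧ a.dropLast ∈ tclAux Γ X B n}

/-- The tree closure `tcl(B)` of `B ⊆ Γ(X)`. -/
def tcl (Γ : TreePlan) {S : Type*} (X : Set S) (B : Set (List (ℕ × Option S))) :
    Set (List (ℕ × Option S)) :=
  ⋃ n, tclAux Γ X B n

/-- Longest common prefix of two lists: the meet in the tree of sequences. -/
def lcp {α : Type*} [DecidableEq α] : List α → List α → List α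
  | a :: as, b :: bs => if a = b then a :: lcp as bs else []
  | _, _ => []

/-- Embedding of `L_Γ`-structures between subsets `A`, `B` of trees of sequences:
an injection preserving the order (initial segment), the root, the predecessor,
the meet, and the predicates `P_σ` (i.e. the projection `π`). -/
structure IsGEmb (Γ : TreePlan) {S T : Type*} [DecidableEq S] [DecidableEq T]
    (A : Set (List (ℕ × Option S))) (B : Set (List (ℕ × Option T)))
    (h : List (ℕ × Option S) → List (ℕ × Option T)) : Prop where
  maps : ∀ a ∈ A, h a ∈ B
  inj : ∀ a ∈ A, ∀ b ∈ A, h a = h b → a = b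
  map_root : h [] = []
  map_le : ∀ a ∈ A, ∀ b ∈ A, (a <+: b ↔ h a <+: h b)
  map_pred : ∀ a ∈ A, h a.dropLast = (h a).dropLast
  map_meet : ∀ a ∈ A, ∀ b ∈ A, h (lcp a b) = lcp (h a) (h b)
  map_P : ∀ a ∈ A, piX (h a) = piX a

open Classical in
/-- `I(Γ, σ)`: the number of infinity-nodes `τ ∈ Γ` with `τ ≤ σ`. -/
noncomputable def Icount (Γ : TreePlan) (σ : List ℕ) : ℕ :=
  (Γ.nodes.filter fun τ => Γ.lab τ = true ∧ τ <+: σ).card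

open Classical in
/-- The relative tree plan `Γ_σ = {τ : σ⌢τ ∈ Γ}` with induced labeling. -/
noncomputable def TreePlan.sub (Γ : TreePlan) (σ : List ℕ) : TreePlan where
  nodes := (Γ.nodes.filter fun τ => σ <+: τ).image (List.drop σ.length)
  lab := fun τ => if τ = [] then false else Γ.lab (σ ++ τ)

open Classical in
/-- The successors of the root of `Γ`. -/
noncomputable def rootSuccs (Γ : TreePlan) : Finset ℕ :=
  (Γ.nodes.filter fun σ => σ.length = 1).image fun σ => σ.headI

/-- `deg(Γ) = max {I(Γ,σ) : σ ∈ Γ}`. -/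
noncomputable def degPlan (Γ : TreePlan) : ℕ := Γ.nodes.sup fun σ => Icount Γ σ

open Classical in
/-- `A(Γ)`: the number of nodes of `Γ` of maximal degree. -/
noncomputable def Acoef (Γ : TreePlan) : ℕ :=
  (Γ.nodes.filter fun σ => Icount Γ σ = degPlan Γ).card

/-!
Universality and closedness are witnessed by the inclusions `Γ(n) ⊆ Γ(ω)`: a finite subset of
`Γ(ω)` uses only finitely many labels, so it lies in some `Γ(n)`.

For homogeneity, note that an embedding between such trees preserves `π` and the predecessor, so
it keeps the first coordinate of every entry and only relabels the second one, as a function of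
the prefix before it; conversely every such relabelling that separates siblings is an embedding.
The extension of `f` along `incl` copies the labels of `f` on the image of `incl` and shifts every
other label past the finitely many labels `f` uses at the siblings in the image.
-/

section GammaSet

variable {S : Type*} {Γ : TreePlan} {X Y : Set S}

def AdmissibleLabel (Γ : TreePlan) (X : Set S) (σ : List ℕ) (t : Option S) : Prop :=
  (Γ.lab σ = false → t = none) ∧ (Γ.lab σ = true → ∃ x ∈ X, t = some x)

lemma mem_gammaSet_iff {a : List (ℕ × Option S)} :
    a ∈ GammaSet Γ X ↔ piX a ∈ Γ.nodes ∧
      ∀ (k : ℕ) (hk : k < a.length), AdmissibleLabel Γ X ((piX a).take (k + 1)) a[k].2 :=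
  Iff.rfl

@[simp]
lemma length_piX (a : List (ℕ × Option S)) : (piX a).length = a.length :=
  List.length_map _

lemma piX_snoc (a : List (ℕ × Option S)) (e : ℕ × Option S) :
    piX (a ++ [e]) = piX a ++ [e.1] := by
  simp [piX]

lemma IsTreePlan.mem_nodes_of_prefix (hΓ : IsTreePlan Γ) {τ σ : List ℕ} (h : τ <+: σ)
    (hσ : σ ∈ Γ.nodes) : τ ∈ Γ.nodes := by
  obtain ⟨r, rfl⟩ := h
  induction r using List.reverseRecOn with
  | nil => simpa using hσ
  | append_singleton r e ih =>
    apply ih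
    simpa [← List.append_assoc] using hΓ.2.1 _ hσ

lemma IsTreePlan.snoc_mem_gammaSet_iff (hΓ : IsTreePlan Γ) {l : List (ℕ × Option S)}
    {e : ℕ × Option S} :
    l ++ [e] ∈ GammaSet Γ X ↔
      l ∈ GammaSet Γ X ∧ piX l ++ [e.1] ∈ Γ.nodes ∧
        AdmissibleLabel Γ X (piX l ++ [e.1]) e.2 := by
  have htake : ∀ k ≤ l.length, (piX l ++ [e.1]).take k = (piX l).take k := fun k hk =>
    List.take_append_of_le_length (by simpa using hk)
  have hfull : (piX l ++ [e.1]).take (l.length + 1) = piX l ++ [e.1] :=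
    List.take_of_length_le (by simp)
  simp only [mem_gammaSet_iff, piX_snoc]
  constructor
  · rintro ⟨hnode, hlab⟩
    refine ⟨⟨hΓ.mem_nodes_of_prefix (List.prefix_append _ _) hnode, fun k hk => ?_⟩, hnode, ?_⟩
    · have h := hlab k (by simp; omega)
      rwa [htake _ hk, List.getElem_append_left hk] at h
    · simpa [hfull] using hlab l.length (by simp)
  · rintro ⟨⟨-, hlab⟩, hnode, hlast⟩
    refine ⟨hnode, fun k hk => ?_⟩
    rcases (show k < l.length ∨ k = l.length by simp at hk; omega) with hk | rfl
    · simpa [htake _ hk, List.getElem_append, hk] using hlab k hk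
    · simpa [hfull] using hlast

lemma IsTreePlan.nil_mem_gammaSet (hΓ : IsTreePlan Γ) :
    ([] : List (ℕ × Option S)) ∈ GammaSet Γ X :=
  ⟨hΓ.1, fun _ hk => absurd hk (Nat.not_lt_zero _)⟩

lemma IsTreePlan.mem_gammaSet_of_prefix (hΓ : IsTreePlan Γ) {p a : List (ℕ × Option S)}
    (hp : p <+: a) (ha : a ∈ GammaSet Γ X) : p ∈ GammaSet Γ X := by
  induction a using List.reverseRecOn with
  | nil => rwa [List.prefix_nil.mp hp]
  | append_singleton l e ih =>
    rcases List.prefix_concat_iff.mp hp with rfl | hp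
    · exact ha
    · exact ih hp (hΓ.snoc_mem_gammaSet_iff.mp ha).1

lemma AdmissibleLabel.mono (hXY : X ⊆ Y) {σ : List ℕ} {t : Option S}
    (h : AdmissibleLabel Γ X σ t) : AdmissibleLabel Γ Y σ t :=
  ⟨h.1, fun hσ => (h.2 hσ).imp fun _ ⟨hx, ht⟩ => ⟨hXY hx, ht⟩⟩

lemma gammaSet_mono (hXY : X ⊆ Y) : GammaSet Γ X ⊆ GammaSet Γ Y :=
  fun _ ⟨hnode, hlab⟩ => ⟨hnode, fun k hk => AdmissibleLabel.mono hXY (hlab k hk)⟩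

lemma mem_gammaSet_of_labels_mem {a : List (ℕ × Option S)} (ha : a ∈ GammaSet Γ Y)
    (hX : ∀ e ∈ a, ∀ x ∈ e.2, x ∈ X) : a ∈ GammaSet Γ X := by
  refine ⟨ha.1, fun k hk => ⟨(ha.2 k hk).1, fun hσ => ?_⟩⟩
  obtain ⟨x, -, hx⟩ := (ha.2 k hk).2 hσ
  exact ⟨x, hX _ (List.getElem_mem hk) x hx, hx⟩

end GammaSet

lemma exists_gammaN_superset {Γ : TreePlan} (F : Finset (List (ℕ × Option ℕ)))
    (hF : ↑F ⊆ GammaOmega Γ) : ∃ N, 1 ≤ N ∧ ↑F ⊆ GammaN Γ N := by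
  let labels : Finset ℕ := F.biUnion fun a => (a.filterMap Prod.snd).toFinset
  refine ⟨labels.sup id + 1, Nat.le_add_left _ _, fun a ha => ?_⟩
  refine mem_gammaSet_of_labels_mem (hF ha) fun e he x hx => Nat.lt_succ_of_le ?_
  exact Finset.le_sup (f := id) (Finset.mem_biUnion.mpr
    ⟨a, ha, List.mem_toFinset.mpr (List.mem_filterMap.mpr ⟨e, he, hx⟩)⟩)

section Lcp

variable {α : Type*} [DecidableEq α]

lemma prefix_lcp_iff : ∀ {p a b : List α}, p <+: lcp a b ↔ p <+: a ∧ p <+: b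
  | [], _, _ => by simp
  | _ :: _, [], _ => by simp [lcp]
  | _ :: _, _ :: _, [] => by simp [lcp]
  | x :: p, a :: as, b :: bs => by
    by_cases hab : a = b
    · subst hab
      simp only [lcp, if_pos, List.cons_prefix_cons, prefix_lcp_iff]
      tauto
    · simp only [lcp, hab, if_false, List.cons_prefix_cons]
      simp only [List.prefix_nil, reduceCtorEq, false_iff, not_and]
      rintro ⟨rfl, -⟩ rfl
      exact absurd rfl hab

lemma lcp_prefix_left (a b : List α) : lcp a b <+: a :=
  (prefix_lcp_iff.mp (List.prefix_refl _)).1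

lemma lcp_prefix_right (a b : List α) : lcp a b <+: b :=
  (prefix_lcp_iff.mp (List.prefix_refl _)).2

end Lcp

section Relabel

variable {S T : Type*}

def relabel (ν : List (ℕ × Option S) → ℕ × Option S → Option T) (b : List (ℕ × Option S)) :
    List (ℕ × Option T) :=
  List.ofFn fun k : Fin b.length => (b[k].1, ν (b.take k) b[k])

variable (ν : List (ℕ × Option S) → ℕ × Option S → Option T)

@[simp]
lemma length_relabel (b : List (ℕ × Option S)) : (relabel ν b).length = b.length :=
  List.length_ofFn

@[simp]
lemma relabel_nil : relabel ν [] = [] := rfl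

lemma relabel_snoc (l : List (ℕ × Option S)) (e : ℕ × Option S) :
    relabel ν (l ++ [e]) = relabel ν l ++ [(e.1, ν l e)] := by
  apply List.ext_getElem (by simp)
  intro k hk _
  simp only [relabel, List.getElem_ofFn, List.getElem_append]
  split_ifs with hkl
  · have hkl' : k < l.length := by simpa using hkl
    simp [hkl', List.take_append_of_le_length hkl'.le]
  · have : k = l.length := by simp at hk hkl; omega
    subst this
    simp

lemma relabel_take (b : List (ℕ × Option S)) (k : ℕ) :
    relabel ν (b.take k) = (relabel ν b).take k := by
  apply List.ext_getElem (by simp)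
  intro i hi _
  simp only [length_relabel, List.length_take, lt_min_iff] at hi
  simp [relabel, List.take_take, min_eq_left hi.1.le]

lemma piX_relabel (b : List (ℕ × Option S)) : piX (relabel ν b) = piX b := by
  apply List.ext_getElem (by simp)
  intro k _ _
  simp [piX, relabel]

lemma relabel_prefix {a b : List (ℕ × Option S)} (h : a <+: b) :
    relabel ν a <+: relabel ν b := by
  rw [List.prefix_iff_eq_take.mp h, relabel_take]
  exact List.take_prefix _ _

lemma relabel_dropLast (b : List (ℕ × Option S)) :
    relabel ν b.dropLast = (relabel ν b).dropLast := by
  rw [List.dropLast_eq_take, List.dropLast_eq_take, relabel_take, length_relabel]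

variable {ν} {A : Set (List (ℕ × Option S))}

lemma relabel_injOn (hA : ∀ a ∈ A, ∀ p, p <+: a → p ∈ A)
    (hν : ∀ l e₁ e₂, l ++ [e₁] ∈ A → l ++ [e₂] ∈ A → e₁.1 = e₂.1 → ν l e₁ = ν l e₂ → e₁ = e₂) :
    Set.InjOn (relabel ν) A := by
  intro a ha b hb hab
  induction a using List.reverseRecOn generalizing b with
  | nil => simpa using (congrArg List.length hab).symm
  | append_singleton l e₁ ih =>
    obtain ⟨l', e₂, rfl⟩ : ∃ l' e₂, b = l' ++ [e₂] := by
      rcases List.eq_nil_or_concat b with rfl | h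
      · simpa using congrArg List.length hab
      · simpa using h
    rw [relabel_snoc, relabel_snoc] at hab
    obtain ⟨hl, he⟩ := List.append_inj' hab rfl
    obtain rfl := ih (hA _ ha _ (List.prefix_append _ _)) (hA _ hb _ (List.prefix_append _ _)) hl
    simp only [List.cons.injEq, Prod.mk.injEq, and_true] at he
    rw [hν l e₁ e₂ ha hb he.1 he.2]

lemma relabel_prefix_relabel_iff (hA : ∀ a ∈ A, ∀ p, p <+: a → p ∈ A)
    (hinj : Set.InjOn (relabel ν) A) {a b : List (ℕ × Option S)} (ha : a ∈ A) (hb : b ∈ A) :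
    relabel ν a <+: relabel ν b ↔ a <+: b := by
  refine ⟨fun h => ?_, relabel_prefix ν⟩
  have h' : relabel ν a = relabel ν (b.take a.length) := by
    rw [relabel_take, List.prefix_iff_eq_take.mp h, length_relabel]
  rw [hinj ha (hA b hb _ (List.take_prefix _ _)) h']
  exact List.take_prefix _ _

lemma relabel_mem_gammaSet {Γ : TreePlan} (hΓ : IsTreePlan Γ) {X : Set S} {Y : Set T}
    (hν : ∀ l e, l ++ [e] ∈ GammaSet Γ X → AdmissibleLabel Γ Y (piX l ++ [e.1]) (ν l e))
    {a : List (ℕ × Option S)} (ha : a ∈ GammaSet Γ X) : relabel ν a ∈ GammaSet Γ Y := by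
  induction a using List.reverseRecOn with
  | nil => exact hΓ.nil_mem_gammaSet
  | append_singleton l e ih =>
    obtain ⟨hl, hnode, -⟩ := hΓ.snoc_mem_gammaSet_iff.mp ha
    rw [relabel_snoc]
    exact hΓ.snoc_mem_gammaSet_iff.mpr ⟨ih hl, by rwa [piX_relabel], by
      simpa [piX_relabel] using hν l e ha⟩

variable [DecidableEq S] [DecidableEq T]

lemma relabel_lcp (hA : ∀ a ∈ A, ∀ p, p <+: a → p ∈ A)
    (hinj : Set.InjOn (relabel ν) A) {a b : List (ℕ × Option S)} (ha : a ∈ A) (hb : b ∈ A) :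
    relabel ν (lcp a b) = lcp (relabel ν a) (relabel ν b) := by
  set q := lcp (relabel ν a) (relabel ν b)
  obtain ⟨hqa, hqb⟩ := prefix_lcp_iff.mp (List.prefix_refl q)
  have hqa' : q = relabel ν (a.take q.length) := by
    rw [relabel_take, ← List.prefix_iff_eq_take.mp hqa]
  have hqb' : q = relabel ν (b.take q.length) := by
    rw [relabel_take, ← List.prefix_iff_eq_take.mp hqb]
  have htake : a.take q.length = b.take q.length :=
    hinj (hA a ha _ (List.take_prefix _ _)) (hA b hb _ (List.take_prefix _ _))
      (hqa'.symm.trans hqb')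
  have hle : q <+: relabel ν (lcp a b) := by
    rw [hqa']
    exact relabel_prefix ν (prefix_lcp_iff.mpr
      ⟨List.take_prefix _ _, htake ▸ List.take_prefix _ _⟩)
  have hge : relabel ν (lcp a b) <+: q := prefix_lcp_iff.mpr
    ⟨relabel_prefix ν (lcp_prefix_left a b), relabel_prefix ν (lcp_prefix_right a b)⟩
  exact hge.eq_of_length (le_antisymm hge.length_le hle.length_le)

theorem isGEmb_relabel (Γ : TreePlan) {B : Set (List (ℕ × Option T))}
    (hA : ∀ a ∈ A, ∀ p, p <+: a → p ∈ A) (hinj : Set.InjOn (relabel ν) A)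
    (hmaps : ∀ a ∈ A, relabel ν a ∈ B) : IsGEmb Γ A B (relabel ν) where
  maps := hmaps
  inj _ ha _ hb := hinj ha hb
  map_root := relabel_nil ν
  map_le _ ha _ hb := (relabel_prefix_relabel_iff hA hinj ha hb).symm
  map_pred a _ := relabel_dropLast ν a
  map_meet _ ha _ hb := relabel_lcp hA hinj ha hb
  map_P a _ := piX_relabel ν a

end Relabel

def lastLabel {S : Type*} (a : List (ℕ × Option S)) : Option S := a.getLast?.bind Prod.snd

@[simp]
lemma lastLabel_snoc {S : Type*} (l : List (ℕ × Option S)) (e : ℕ × Option S) :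
    lastLabel (l ++ [e]) = e.2 := by
  simp [lastLabel]

namespace IsGEmb

variable {Γ : TreePlan} {S T : Type*} [DecidableEq S] [DecidableEq T]
  {A : Set (List (ℕ × Option S))} {B : Set (List (ℕ × Option T))}
  {h : List (ℕ × Option S) → List (ℕ × Option T)}

lemma injOn (hh : IsGEmb Γ A B h) : Set.InjOn h A :=
  fun a ha b hb => hh.inj a ha b hb

lemma length_map (hh : IsGEmb Γ A B h) {a : List (ℕ × Option S)} (ha : a ∈ A) :
    (h a).length = a.length := by
  simpa using congrArg List.length (hh.map_P a ha)

lemma map_snoc (hh : IsGEmb Γ A B h) {c : List (ℕ × Option S)} {e : ℕ × Option S}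
    (hc : c ++ [e] ∈ A) : h (c ++ [e]) = h c ++ [(e.1, lastLabel (h (c ++ [e])))] := by
  obtain ⟨d, x, hd⟩ : ∃ d x, h (c ++ [e]) = d ++ [x] := by
    rcases List.eq_nil_or_concat (h (c ++ [e])) with h0 | h1
    · simpa [h0] using hh.length_map hc
    · simpa using h1
  have hdc : d = h c := by simpa [hd] using (hh.map_pred _ hc).symm
  have hx : x.1 = e.1 := by
    have hP := hh.map_P _ hc
    simp [hd, piX_snoc] at hP
    exact hP.2
  rw [hd, hdc, lastLabel_snoc, ← hx]

lemma exists_snoc_eq (hh : IsGEmb Γ A B h) {a : List (ℕ × Option S)} (ha : a ∈ A)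
    {l : List (ℕ × Option T)} {e : ℕ × Option T} (hal : h a = l ++ [e]) :
    ∃ c d, a = c ++ [d] ∧ h c = l ∧ d.1 = e.1 := by
  obtain ⟨c, d, rfl⟩ : ∃ c d, a = c ++ [d] := by
    rcases List.eq_nil_or_concat a with h0 | h1
    · simp [h0, hh.map_root] at hal
    · simpa using h1
  rw [hh.map_snoc ha] at hal
  obtain ⟨hc, hd⟩ := List.append_inj' hal rfl
  simp only [List.cons.injEq, and_true] at hd
  exact ⟨c, d, rfl, hc, by rw [← hd]⟩

lemma admissibleLabel_lastLabel (hΓ : IsTreePlan Γ) {X : Set S} {Y : Set T}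
    (hh : IsGEmb Γ (GammaSet Γ X) (GammaSet Γ Y) h) {c : List (ℕ × Option S)}
    {d : ℕ × Option S} (hcd : c ++ [d] ∈ GammaSet Γ X) :
    AdmissibleLabel Γ Y (piX c ++ [d.1]) (lastLabel (h (c ++ [d]))) := by
  have hmem := hh.maps _ hcd
  rw [hh.map_snoc hcd] at hmem
  have hP := hh.map_P c (hΓ.mem_gammaSet_of_prefix (List.prefix_append _ _) hcd)
  simpa [hP] using (hΓ.snoc_mem_gammaSet_iff.mp hmem).2.2

end IsGEmb

lemma isGEmb_id {Γ : TreePlan} {S : Type*} [DecidableEq S] {X Y : Set S} (hXY : X ⊆ Y) :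
    IsGEmb Γ (GammaSet Γ X) (GammaSet Γ Y) id where
  maps _ ha := gammaSet_mono hXY ha
  inj _ _ _ _ h := h
  map_root := rfl
  map_le _ _ _ _ := Iff.rfl
  map_pred _ _ := rfl
  map_meet _ _ _ _ := rfl
  map_P _ _ := rfl

section Extension

open Function

variable {Γ : TreePlan} {m n : ℕ} {B : Set (List (ℕ × Option ℕ))}
  {incl f : List (ℕ × Option ℕ) → List (ℕ × Option ℕ)}

noncomputable def freshBound (Γ : TreePlan) (m : ℕ)
    (incl f : List (ℕ × Option ℕ) → List (ℕ × Option ℕ)) (l : List (ℕ × Option ℕ)) (i : ℕ) : ℕ :=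
  (Finset.range m).sup fun x =>
    (lastLabel (f (invFunOn incl (GammaN Γ m) l ++ [(i, some x)]))).getD 0

open Classical in
noncomputable def extLabel (Γ : TreePlan) (m : ℕ)
    (incl f : List (ℕ × Option ℕ) → List (ℕ × Option ℕ)) (l : List (ℕ × Option ℕ))
    (e : ℕ × Option ℕ) : Option ℕ :=
  if l ++ [e] ∈ incl '' GammaN Γ m then lastLabel (f (invFunOn incl (GammaN Γ m) (l ++ [e])))
  else e.2.map (freshBound Γ m incl f l e.1 + 1 + ·)

lemma extLabel_of_mem (hincl : IsGEmb Γ (GammaN Γ m) B incl) {c : List (ℕ × Option ℕ)}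
    {d : ℕ × Option ℕ} (hc : c ++ [d] ∈ GammaN Γ m) {e : ℕ × Option ℕ}
    (he : incl (c ++ [d]) = incl c ++ [e]) :
    extLabel Γ m incl f (incl c) e = lastLabel (f (c ++ [d])) := by
  rw [extLabel, if_pos ⟨c ++ [d], hc, he⟩, ← he, hincl.injOn.leftInvOn_invFunOn hc]

lemma relabel_extLabel_incl (hΓ : IsTreePlan Γ) (hincl : IsGEmb Γ (GammaN Γ m) B incl)
    (hf : IsGEmb Γ (GammaN Γ m) (GammaOmega Γ) f) {c : List (ℕ × Option ℕ)}
    (hc : c ∈ GammaN Γ m) : relabel (extLabel Γ m incl f) (incl c) = f c := by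
  induction c using List.reverseRecOn with
  | nil => rw [hincl.map_root, hf.map_root, relabel_nil]
  | append_singleton c d ih =>
    rw [hincl.map_snoc hc, relabel_snoc,
      ih (hΓ.mem_gammaSet_of_prefix (List.prefix_append _ _) hc),
      extLabel_of_mem hincl hc (hincl.map_snoc hc)]
    exact (hf.map_snoc hc).symm

lemma exists_extLabel_eq (hincl : IsGEmb Γ (GammaN Γ m) B incl) {l : List (ℕ × Option ℕ)}
    {e : ℕ × Option ℕ} (him : l ++ [e] ∈ incl '' GammaN Γ m) :
    ∃ c d, c ++ [d] ∈ GammaN Γ m ∧ incl c = l ∧ d.1 = e.1 ∧ incl (c ++ [d]) = l ++ [e] ∧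
      extLabel Γ m incl f l e = lastLabel (f (c ++ [d])) := by
  obtain ⟨a, ha, hal⟩ := him
  obtain ⟨c, d, rfl, rfl, hd⟩ := hincl.exists_snoc_eq ha hal
  exact ⟨c, d, ha, rfl, hd, hal, extLabel_of_mem hincl ha hal⟩

lemma admissibleLabel_extLabel (hΓ : IsTreePlan Γ) (hincl : IsGEmb Γ (GammaN Γ m) B incl)
    (hf : IsGEmb Γ (GammaN Γ m) (GammaOmega Γ) f) {l : List (ℕ × Option ℕ)} {e : ℕ × Option ℕ}
    (hle : l ++ [e] ∈ GammaN Γ n) :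
    AdmissibleLabel Γ Set.univ (piX l ++ [e.1]) (extLabel Γ m incl f l e) := by
  by_cases him : l ++ [e] ∈ incl '' GammaN Γ m
  · obtain ⟨c, d, hcd, rfl, hd, -, heq⟩ := exists_extLabel_eq (f := f) hincl him
    rw [heq, ← hd, hincl.map_P c (hΓ.mem_gammaSet_of_prefix (List.prefix_append _ _) hcd)]
    exact hf.admissibleLabel_lastLabel hΓ hcd
  · rw [extLabel, if_neg him]
    obtain ⟨hnone, hsome⟩ := (hΓ.snoc_mem_gammaSet_iff.mp hle).2.2
    refine ⟨fun h => by simp [hnone h], fun h => ?_⟩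
    obtain ⟨x, -, hx⟩ := hsome h
    simp [hx]

lemma extLabel_getD_le_freshBound (hΓ : IsTreePlan Γ) (hincl : IsGEmb Γ (GammaN Γ m) B incl)
    {l : List (ℕ × Option ℕ)} {e : ℕ × Option ℕ} (him : l ++ [e] ∈ incl '' GammaN Γ m)
    (hlab : Γ.lab (piX l ++ [e.1]) = true) :
    (extLabel Γ m incl f l e).getD 0 ≤ freshBound Γ m incl f l e.1 := by
  obtain ⟨c, d, hcd, rfl, hd, -, heq⟩ := exists_extLabel_eq (f := f) hincl him
  have hc : c ∈ GammaN Γ m := hΓ.mem_gammaSet_of_prefix (List.prefix_append _ _) hcd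
  obtain ⟨x, hx, hdx⟩ := (hΓ.snoc_mem_gammaSet_iff.mp hcd).2.2.2
    (by rwa [hd, ← hincl.map_P c hc])
  rw [heq, freshBound, hincl.injOn.leftInvOn_invFunOn hc,
    show d = (e.1, some x) from Prod.ext hd hdx]
  exact Finset.le_sup (f := fun y => (lastLabel (f (c ++ [(e.1, some y)]))).getD 0)
    (Finset.mem_range.mpr hx)

lemma extLabel_ne_of_mem_image (hΓ : IsTreePlan Γ) (hincl : IsGEmb Γ (GammaN Γ m) B incl)
    {l : List (ℕ × Option ℕ)} {i : ℕ} {t₁ t₂ : Option ℕ} (hlab : Γ.lab (piX l ++ [i]) = true)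
    (h₁ : l ++ [(i, t₁)] ∈ incl '' GammaN Γ m) (h₂ : l ++ [(i, t₂)] ∉ incl '' GammaN Γ m)
    (hmem₂ : l ++ [(i, t₂)] ∈ GammaN Γ n) :
    extLabel Γ m incl f l (i, t₁) ≠ extLabel Γ m incl f l (i, t₂) := by
  intro heq
  obtain ⟨x, -, hx⟩ := (hΓ.snoc_mem_gammaSet_iff.mp hmem₂).2.2.2 hlab
  have hle := extLabel_getD_le_freshBound (f := f) hΓ hincl h₁ hlab
  rw [heq, extLabel, if_neg h₂, show t₂ = some x from hx] at hle
  simp only [Option.map_some, Option.getD_some] at hle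
  omega

lemma eq_of_extLabel_eq_of_mem_image (hΓ : IsTreePlan Γ) (hincl : IsGEmb Γ (GammaN Γ m) B incl)
    (hf : IsGEmb Γ (GammaN Γ m) (GammaOmega Γ) f) {l : List (ℕ × Option ℕ)} {i : ℕ}
    {t₁ t₂ : Option ℕ} (h₁ : l ++ [(i, t₁)] ∈ incl '' GammaN Γ m)
    (h₂ : l ++ [(i, t₂)] ∈ incl '' GammaN Γ m)
    (heq : extLabel Γ m incl f l (i, t₁) = extLabel Γ m incl f l (i, t₂)) : t₁ = t₂ := by
  obtain ⟨c, d₁, hcd₁, rfl, hd₁, hincl₁, heq₁⟩ := exists_extLabel_eq (f := f) hincl h₁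
  obtain ⟨c', d₂, hcd₂, hcc', hd₂, hincl₂, heq₂⟩ := exists_extLabel_eq (f := f) hincl h₂
  obtain rfl : c' = c := hincl.inj _ (hΓ.mem_gammaSet_of_prefix (List.prefix_append _ _) hcd₂)
    _ (hΓ.mem_gammaSet_of_prefix (List.prefix_append _ _) hcd₁) hcc'
  have hfd : f (c' ++ [d₁]) = f (c' ++ [d₂]) := by
    rw [hf.map_snoc hcd₁, hf.map_snoc hcd₂, ← heq₁, ← heq₂, heq, hd₁, hd₂]
  have hd : d₁ = d₂ := by simpa using hf.inj _ hcd₁ _ hcd₂ hfd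
  simpa [hd, hincl₂] using hincl₁.symm

lemma eq_of_extLabel_eq (hΓ : IsTreePlan Γ) (hincl : IsGEmb Γ (GammaN Γ m) B incl)
    (hf : IsGEmb Γ (GammaN Γ m) (GammaOmega Γ) f) {l : List (ℕ × Option ℕ)}
    {e₁ e₂ : ℕ × Option ℕ} (h₁ : l ++ [e₁] ∈ GammaN Γ n) (h₂ : l ++ [e₂] ∈ GammaN Γ n)
    (hfst : e₁.1 = e₂.1)
    (heq : extLabel Γ m incl f l e₁ = extLabel Γ m incl f l e₂) : e₁ = e₂ := by
  obtain ⟨i, t₁⟩ := e₁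
  obtain ⟨_, t₂⟩ := e₂
  obtain rfl : i = _ := hfst
  obtain ⟨hnone₁, -⟩ := (hΓ.snoc_mem_gammaSet_iff.mp h₁).2.2
  obtain ⟨hnone₂, -⟩ := (hΓ.snoc_mem_gammaSet_iff.mp h₂).2.2
  cases hlab : Γ.lab (piX l ++ [i])
  · simp only at hnone₁ hnone₂
    rw [hnone₁ hlab, hnone₂ hlab]
  by_cases him₁ : l ++ [(i, t₁)] ∈ incl '' GammaN Γ m <;>
    by_cases him₂ : l ++ [(i, t₂)] ∈ incl '' GammaN Γ m
  · rw [eq_of_extLabel_eq_of_mem_image hΓ hincl hf him₁ him₂ heq]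
  · exact absurd heq (extLabel_ne_of_mem_image hΓ hincl hlab him₁ him₂ h₂)
  · exact absurd heq.symm (extLabel_ne_of_mem_image hΓ hincl hlab him₂ him₁ h₁)
  · rw [extLabel, extLabel, if_neg him₁, if_neg him₂] at heq
    rw [(Option.map_injective (add_right_injective _) heq : t₁ = t₂)]

theorem exists_isGEmb_extension (hΓ : IsTreePlan Γ) (hincl : IsGEmb Γ (GammaN Γ m) B incl)
    (hf : IsGEmb Γ (GammaN Γ m) (GammaOmega Γ) f) :
    ∃ g : List (ℕ × Option ℕ) → List (ℕ × Option ℕ),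
      IsGEmb Γ (GammaN Γ n) (GammaOmega Γ) g ∧ ∀ a ∈ GammaN Γ m, g (incl a) = f a := by
  have hpre : ∀ a ∈ GammaN Γ n, ∀ p, p <+: a → p ∈ GammaN Γ n :=
    fun _ ha _ hp => hΓ.mem_gammaSet_of_prefix hp ha
  refine ⟨relabel (extLabel Γ m incl f), isGEmb_relabel Γ hpre ?_ ?_,
    fun a ha => relabel_extLabel_incl hΓ hincl hf ha⟩
  · exact relabel_injOn hpre fun l e₁ e₂ h₁ h₂ => eq_of_extLabel_eq hΓ hincl hf h₁ h₂
  · exact fun a => relabel_mem_gammaSet hΓ fun l e => admissibleLabel_extLabel hΓ hincl hf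

end Extension

/-- `Γ(ω)` is the Fraïssé limit of `K(Γ)`: it is `K(Γ)`-universal (every `Γ(n)`
embeds into `Γ(ω)`), `K(Γ)`-homogeneous (every embedding `Γ(m) → Γ(ω)` extends
along any embedding `Γ(m) → Γ(n)`), and `K(Γ)`-closed (every finite subset of
`Γ(ω)` is contained in an embedded copy of some `Γ(n)`). -/
theorem gammaOmega_is_generic (Γ : TreePlan) (hΓ : IsTreePlan Γ) :
    (∀ n : ℕ, 1 ≤ n → ∃ h : List (ℕ × Option ℕ) → List (ℕ × Option ℕ),
      IsGEmb Γ (GammaN Γ n) (GammaOmega Γ) h) ∧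
    (∀ m n : ℕ, 1 ≤ m → m ≤ n →
      ∀ incl f : List (ℕ × Option ℕ) → List (ℕ × Option ℕ),
        IsGEmb Γ (GammaN Γ m) (GammaN Γ n) incl →
        IsGEmb Γ (GammaN Γ m) (GammaOmega Γ) f →
        ∃ g : List (ℕ × Option ℕ) → List (ℕ × Option ℕ),
          IsGEmb Γ (GammaN Γ n) (GammaOmega Γ) g ∧
          ∀ a ∈ GammaN Γ m, g (incl a) = f a) ∧
    (∀ F : Finset (List (ℕ × Option ℕ)), ↑F ⊆ GammaOmega Γ →
      ∃ (n : ℕ) (h : List (ℕ × Option ℕ) → List (ℕ × Option ℕ)),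
        1 ≤ n ∧ IsGEmb Γ (GammaN Γ n) (GammaOmega Γ) h ∧
        ↑F ⊆ h '' GammaN Γ n) := by
  refine ⟨fun n _ => ⟨id, isGEmb_id (Set.subset_univ _)⟩,
    fun m n _ _ incl f hincl hf => exists_isGEmb_extension hΓ hincl hf, fun F hF => ?_⟩
  obtain ⟨N, hN, hFN⟩ := exists_gammaN_superset F hF
  exact ⟨N, id, hN, isGEmb_id (Set.subset_univ _), by rwa [Set.image_id]⟩
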